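/- arXiv:2404.09792 — 6 statements merged into one kernel-verified Lean document; each statement's English description precedes it below -/
import Mathlib

section
/- Let κ ∈ ℝ and let g : (0, T) → ℝ be differentiable with g'(t) + g(t)² + κ ≤ 0 for all t, and suppose g(t) → +∞ as t → 0⁺. Then g(t) ≤ ct_κ(t) for all t ∈ (0, T) in the domain of ct_κ, where ct_κ = cs_κ / sn_κ is the model cotangent function (ct_κ(t) = cot(t) for κ = 1, 1/t for κ = 0, coth(t) for κ = -1, suitably rescaled in general). -/
/-!
The quantity `w = g sn_κ² - sn_κ cs_κ = sn_κ² (g - ct_κ)` has derivative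
`(g' + g² + κ) sn_κ² - (g sn_κ - cs_κ)² ≤ 0`, so it is antitone on `(0, T)`.
Near `0` the Riccati inequality gives `g' ≤ -g²/2`, hence `g(s) ≤ 2/s`; since `sn_κ(s) ~ s`,
this makes `g sn_κ²` tend to `0`, so `limsup_{s → 0⁺} w(s) ≤ 0` and therefore `w ≤ 0`.
-/

/-- The model sine function `sn_κ`: solution of `y'' + κ y = 0`, `y 0 = 0`, `y' 0 = 1`. -/
noncomputable def snK (κ t : ℝ) : ℝ :=
  if 0 < κ then Real.sin (Real.sqrt κ * t) / Real.sqrt κ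
  else if κ < 0 then Real.sinh (Real.sqrt (-κ) * t) / Real.sqrt (-κ)
  else t

/-- The model cosine function `cs_κ`: solution of `y'' + κ y = 0`, `y 0 = 1`, `y' 0 = 0`. -/
noncomputable def csK (κ t : ℝ) : ℝ :=
  if 0 < κ then Real.cos (Real.sqrt κ * t)
  else if κ < 0 then Real.cosh (Real.sqrt (-κ) * t)
  else 1

/-- The model cotangent `ct_κ = cs_κ / sn_κ`. -/
noncomputable def ctK (κ t : ℝ) : ℝ := csK κ t / snK κ t

open Filter Set Topology

lemma hasDerivAt_snK (κ t : ℝ) : HasDerivAt (snK κ) (csK κ t) t := by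
  unfold snK csK
  split_ifs with hpos hneg
  · have hs : Real.sqrt κ ≠ 0 := (Real.sqrt_pos.2 hpos).ne'
    exact ((((hasDerivAt_id' t).const_mul _).sin).div_const _).congr_deriv (by field_simp)
  · have hs : Real.sqrt (-κ) ≠ 0 := (Real.sqrt_pos.2 (neg_pos.2 hneg)).ne'
    exact ((((hasDerivAt_id' t).const_mul _).sinh).div_const _).congr_deriv (by field_simp)
  · exact hasDerivAt_id t

lemma hasDerivAt_csK (κ t : ℝ) : HasDerivAt (csK κ) (-κ * snK κ t) t := by
  unfold snK csK
  split_ifs with hpos hneg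
  · have hs : Real.sqrt κ ≠ 0 := (Real.sqrt_pos.2 hpos).ne'
    refine (((hasDerivAt_id' t).const_mul _).cos).congr_deriv ?_
    field_simp
    rw [Real.sq_sqrt hpos.le]
    ring
  · have hs : Real.sqrt (-κ) ≠ 0 := (Real.sqrt_pos.2 (neg_pos.2 hneg)).ne'
    refine (((hasDerivAt_id' t).const_mul _).cosh).congr_deriv ?_
    field_simp
    rw [Real.sq_sqrt (neg_pos.2 hneg).le]
    ring
  · obtain rfl : κ = 0 := le_antisymm (not_lt.1 hpos) (not_lt.1 hneg)
    simpa using hasDerivAt_const t (1 : ℝ)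

lemma snK_zero (κ : ℝ) : snK κ 0 = 0 := by
  unfold snK; split_ifs <;> simp

lemma csK_zero (κ : ℝ) : csK κ 0 = 1 := by
  unfold csK; split_ifs <;> simp

lemma tendsto_snK_nhdsGT_zero (κ : ℝ) : Tendsto (snK κ) (𝓝[>] 0) (𝓝 0) := by
  simpa [snK_zero] using (hasDerivAt_snK κ 0).continuousAt.tendsto.mono_left nhdsWithin_le_nhds

lemma tendsto_csK_nhdsGT_zero (κ : ℝ) : Tendsto (csK κ) (𝓝[>] 0) (𝓝 1) := by
  simpa [csK_zero] using (hasDerivAt_csK κ 0).continuousAt.tendsto.mono_left nhdsWithin_le_nhds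

lemma tendsto_snK_div_self (κ : ℝ) : Tendsto (fun s => snK κ s / s) (𝓝[>] 0) (𝓝 1) := by
  simpa [snK_zero, csK_zero, div_eq_inv_mul] using (hasDerivAt_snK κ 0).tendsto_slope_zero_right

lemma antitoneOn_Ioo_of_hasDerivAt_nonpos {f f' : ℝ → ℝ} {a b : ℝ}
    (hf : ∀ x ∈ Ioo a b, HasDerivAt f (f' x) x) (hf' : ∀ x ∈ Ioo a b, f' x ≤ 0) :
    AntitoneOn f (Ioo a b) :=
  antitoneOn_of_hasDerivWithinAt_nonpos (convex_Ioo a b)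
    (fun x hx => (hf x hx).continuousAt.continuousWithinAt)
    (by simpa only [interior_Ioo] using fun x hx => (hf x hx).hasDerivWithinAt)
    (by simpa only [interior_Ioo] using hf')

lemma AntitoneOn.le_of_eventually_le_of_tendsto {f u : ℝ → ℝ} {a b l x : ℝ}
    (hf : AntitoneOn f (Ioo a b)) (hfu : ∀ᶠ s in 𝓝[>] a, f s ≤ u s)
    (hu : Tendsto u (𝓝[>] a) (𝓝 l)) (hx : x ∈ Ioo a b) : f x ≤ l := by
  refine ge_of_tendsto hu ?_
  filter_upwards [hfu, Ioo_mem_nhdsGT hx.1] with s hfs hs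
  exact (hf ⟨hs.1, hs.2.trans hx.2⟩ hx hs.2.le).trans hfs

-- `a t - 1 / g t` is antitone and tends to `0` at `0⁺`.
lemma mul_mul_le_one_of_hasDerivAt_le_neg_mul_sq {g g' : ℝ → ℝ} {a ε : ℝ}
    (hderiv : ∀ x ∈ Ioo 0 ε, HasDerivAt g (g' x) x) (hpos : ∀ x ∈ Ioo 0 ε, 0 < g x)
    (hineq : ∀ x ∈ Ioo 0 ε, g' x ≤ -a * g x ^ 2) (hblow : Tendsto g (𝓝[>] 0) atTop) :
    ∀ x ∈ Ioo 0 ε, a * x * g x ≤ 1 := by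
  intro x hx
  have hanti : AntitoneOn (fun s => a * s - (g s)⁻¹) (Ioo 0 ε) := by
    refine antitoneOn_Ioo_of_hasDerivAt_nonpos
      (fun s hs => ((hasDerivAt_id' s).const_mul a).sub ((hderiv s hs).inv (hpos s hs).ne'))
      fun s hs => ?_
    have hgs := hpos s hs
    rw [mul_one, sub_nonpos, neg_div, le_neg, div_le_iff₀ (by positivity)]
    linarith [hineq s hs]
  have hlim : Tendsto (fun s => a * s - (g s)⁻¹) (𝓝[>] 0) (𝓝 0) := by
    have hid : Tendsto (fun s : ℝ => a * s) (𝓝[>] 0) (𝓝 0) := by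
      simpa using ((continuous_const_mul a).tendsto 0).mono_left nhdsWithin_le_nhds
    simpa using hid.sub hblow.inv_tendsto_atTop
  have hle := hanti.le_of_eventually_le_of_tendsto (Eventually.of_forall fun _ => le_rfl) hlim hx
  have hgx := hpos x hx
  calc a * x * g x ≤ (g x)⁻¹ * g x := mul_le_mul_of_nonneg_right (sub_nonpos.1 hle) hgx.le
    _ = 1 := inv_mul_cancel₀ hgx.ne'

lemma eventually_mul_le_two_of_riccati {κ T : ℝ} {g g' : ℝ → ℝ} (hT : 0 < T)
    (hderiv : ∀ t ∈ Ioo 0 T, HasDerivAt g (g' t) t)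
    (hineq : ∀ t ∈ Ioo 0 T, g' t + g t ^ 2 + κ ≤ 0) (hblow : Tendsto g (𝓝[>] 0) atTop) :
    ∀ᶠ s in 𝓝[>] 0, s * g s ≤ 2 := by
  obtain ⟨ε, hε, hlarge⟩ :=
    mem_nhdsGT_iff_exists_Ioo_subset.1 (hblow.eventually (eventually_ge_atTop (|κ| + 1)))
  have hsub : Ioo 0 (min ε T) ⊆ Ioo 0 T := Ioo_subset_Ioo_right (min_le_right ε T)
  have hlarge' : ∀ s ∈ Ioo 0 (min ε T), |κ| + 1 ≤ g s := fun s hs =>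
    hlarge (Ioo_subset_Ioo_right (min_le_left ε T) hs)
  have hpos : ∀ s ∈ Ioo 0 (min ε T), 0 < g s := fun s hs =>
    (add_pos_of_nonneg_of_pos (abs_nonneg κ) one_pos).trans_le (hlarge' s hs)
  -- once `g² ≥ -2κ`, the Riccati inequality gives `g' ≤ -g²/2`
  have hhalf : ∀ s ∈ Ioo 0 (min ε T), g' s ≤ -(1 / 2) * g s ^ 2 := fun s hs => by
    nlinarith [hineq s (hsub hs), hlarge' s hs, neg_abs_le κ, abs_nonneg κ]
  have hbound := mul_mul_le_one_of_hasDerivAt_le_neg_mul_sq (fun s hs => hderiv s (hsub hs))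
    hpos hhalf hblow
  filter_upwards [Ioo_mem_nhdsGT (lt_min hε hT)] with s hs
  linarith [hbound s hs]

lemma antitoneOn_mul_snK_sq_sub_snK_mul_csK {κ T : ℝ} {g g' : ℝ → ℝ}
    (hderiv : ∀ t ∈ Ioo 0 T, HasDerivAt g (g' t) t)
    (hineq : ∀ t ∈ Ioo 0 T, g' t + g t ^ 2 + κ ≤ 0) :
    AntitoneOn (fun t => g t * snK κ t ^ 2 - snK κ t * csK κ t) (Ioo 0 T) := by
  refine antitoneOn_Ioo_of_hasDerivAt_nonpos (fun t ht =>
    ((hderiv t ht).mul ((hasDerivAt_snK κ t).pow 2)).sub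
      ((hasDerivAt_snK κ t).mul (hasDerivAt_csK κ t))) fun t ht => ?_
  calc _ = (g' t + g t ^ 2 + κ) * snK κ t ^ 2 - (g t * snK κ t - csK κ t) ^ 2 := by
        simp only [Pi.pow_apply]; ring
    _ ≤ 0 := sub_nonpos.2 ((mul_nonpos_of_nonpos_of_nonneg (hineq t ht) (sq_nonneg _)).trans
      (sq_nonneg _))

/-- If `g` satisfies the Riccati inequality `g' + g² + κ ≤ 0` on `(0, T)` and blows up to
`+∞` as `t → 0⁺`, then `g(t) ≤ ct_κ(t)` on the domain of `ct_κ`. -/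
theorem riccati_blowup_le_ctK (κ T : ℝ) (g g' : ℝ → ℝ)
    (hderiv : ∀ t ∈ Set.Ioo (0:ℝ) T, HasDerivAt g (g' t) t)
    (hineq : ∀ t ∈ Set.Ioo (0:ℝ) T, g' t + (g t) ^ 2 + κ ≤ 0)
    (hblow : Filter.Tendsto g (nhdsWithin 0 (Set.Ioi 0)) Filter.atTop) :
    ∀ t ∈ Set.Ioo (0:ℝ) T, 0 < snK κ t → g t ≤ ctK κ t := by
  intro t ht hsn
  have hbound : ∀ᶠ s in 𝓝[>] 0, g s * snK κ s ^ 2 - snK κ s * csK κ s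
      ≤ 2 * (snK κ s / s * snK κ s) + |snK κ s * csK κ s| := by
    filter_upwards [eventually_mul_le_two_of_riccati (ht.1.trans ht.2) hderiv hineq hblow,
      self_mem_nhdsWithin] with s hsg (hs : 0 < s)
    have hsq : 0 ≤ snK κ s / s * snK κ s := by
      rw [div_mul_eq_mul_div]; exact div_nonneg (mul_self_nonneg _) hs.le
    calc g s * snK κ s ^ 2 - snK κ s * csK κ s
        = s * g s * (snK κ s / s * snK κ s) - snK κ s * csK κ s := by field_simp
      _ ≤ _ := by
        linarith [mul_le_mul_of_nonneg_right hsg hsq, neg_abs_le (snK κ s * csK κ s)]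
  have hlim : Tendsto (fun s => 2 * (snK κ s / s * snK κ s) + |snK κ s * csK κ s|)
      (𝓝[>] 0) (𝓝 0) := by
    simpa using (((tendsto_snK_div_self κ).mul (tendsto_snK_nhdsGT_zero κ)).const_mul 2).add
      ((tendsto_snK_nhdsGT_zero κ).mul (tendsto_csK_nhdsGT_zero κ)).abs
  have hneg := (antitoneOn_mul_snK_sq_sub_snK_mul_csK hderiv hineq).le_of_eventually_le_of_tendsto
    hbound hlim ht
  rw [ctK, le_div_iff₀ hsn]
  nlinarith
end

section
/- Let f : [x, y] → ℝ be continuous and satisfy f'' + κ f < λ in the classical sense (f is twice differentiable) with κ < 0. Let f̄ : [x, y] → ℝ satisfy f̄'' + κ f̄ = λ with f̄(x) = f(x) and f̄(y) = f(y). Then f ≥ f̄ on [x, y]. -/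
/-! A maximum principle: a positive maximum of `g = f̄ - f` on `[x, y]` would be attained in the
interior, where `g'' ≤ 0`; but there `g'' > -κ g > 0`. -/

open Filter Set Topology

theorem IsLocalMax.second_deriv_nonpos {g g' : ℝ → ℝ} {t₀ a : ℝ} (hmax : IsLocalMax g t₀)
    (hg : ∀ᶠ t in 𝓝 t₀, HasDerivAt g (g' t) t) (hg' : HasDerivAt g' a t₀) : a ≤ 0 := by
  -- If `a > 0` then `g' > 0` just right of the critical point `t₀`, so by the mean value
  -- theorem `g` increases there.
  by_contra! ha
  have hcrit : g' t₀ = 0 := hmax.hasDerivAt_eq_zero hg.self_of_nhds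
  have hpos : ∀ᶠ t in 𝓝[>] t₀, 0 < g' t := by
    filter_upwards [nhdsGT_le_nhdsNE t₀
      ((hasDerivAt_iff_tendsto_slope.mp hg').eventually (eventually_gt_nhds ha)),
      self_mem_nhdsWithin] with t hslope (ht : t₀ < t)
    exact pos_of_slope_pos ht hslope hcrit
  obtain ⟨l, u, ⟨hl, hu⟩, hsub⟩ := mem_nhds_iff_exists_Ioo_subset.mp
    (hg.and (hmax.and (eventually_nhdsWithin_iff.mp hpos)))
  set t := (t₀ + u) / 2
  have htu : t₀ < t := by simp only [t]; linarith
  have hIcc : Icc t₀ t ⊆ Ioo l u := Icc_subset_Ioo hl (by simp only [t]; linarith)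
  obtain ⟨c, hc, hslope⟩ := exists_hasDerivAt_eq_slope g g' htu
    (fun s hs => (hsub (hIcc hs)).1.continuousAt.continuousWithinAt)
    (fun s hs => (hsub (hIcc (Ioo_subset_Icc_self hs))).1)
  have hgc : 0 < g' c := (hsub (hIcc (Ioo_subset_Icc_self hc))).2.2 hc.1
  have hdecr : (g t - g t₀) / (t - t₀) ≤ 0 :=
    div_nonpos_of_nonpos_of_nonneg (sub_nonpos.mpr (hsub (hIcc (right_mem_Icc.mpr htu.le))).2.1)
      (sub_nonneg.mpr htu.le)
  linarith

theorem nonpos_of_endpoints_nonpos_of_second_deriv_pos {g g' g'' : ℝ → ℝ} {x y : ℝ}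
    (hg : ∀ t ∈ Icc x y, HasDerivWithinAt g (g' t) (Icc x y) t)
    (hg' : ∀ t ∈ Ioo x y, HasDerivAt g' (g'' t) t)
    (hconvex : ∀ t ∈ Ioo x y, 0 < g t → 0 < g'' t) (hx : g x ≤ 0) (hy : g y ≤ 0) :
    ∀ t ∈ Icc x y, g t ≤ 0 := by
  intro t ht
  obtain ⟨t₀, ht₀, hmax⟩ := isCompact_Icc.exists_isMaxOn ⟨t, ht⟩
    fun s hs => (hg s hs).continuousWithinAt
  by_contra! hpos
  have hmax_pos : 0 < g t₀ := hpos.trans_le (hmax ht)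
  have hinterior : t₀ ∈ Ioo x y :=
    ⟨ht₀.1.lt_of_ne (by rintro rfl; linarith), ht₀.2.lt_of_ne (by rintro rfl; linarith)⟩
  have hderiv : ∀ᶠ s in 𝓝 t₀, HasDerivAt g (g' s) s := by
    filter_upwards [isOpen_Ioo.mem_nhds hinterior] with s hs
    exact (hg s (Ioo_subset_Icc_self hs)).hasDerivAt (Icc_mem_nhds hs.1 hs.2)
  have hlocal : IsLocalMax g t₀ := hmax.isLocalMax (Icc_mem_nhds hinterior.1 hinterior.2)
  linarith [hlocal.second_deriv_nonpos hderiv (hg' t₀ hinterior), hconvex t₀ hinterior hmax_pos]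

theorem jensen_comparison_neg_general (κ lam x y : ℝ) (hκ : κ < 0)
    (f f' f'' fb fb' fb'' : ℝ → ℝ)
    (hf1 : ∀ t ∈ Set.Icc x y, HasDerivWithinAt f (f' t) (Set.Icc x y) t)
    (hf2 : ∀ t ∈ Set.Icc x y, HasDerivWithinAt f' (f'' t) (Set.Icc x y) t)
    (hfineq : ∀ t ∈ Set.Icc x y, f'' t + κ * f t < lam)
    (hb1 : ∀ t ∈ Set.Icc x y, HasDerivWithinAt fb (fb' t) (Set.Icc x y) t)
    (hb2 : ∀ t ∈ Set.Icc x y, HasDerivWithinAt fb' (fb'' t) (Set.Icc x y) t)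
    (hbeq : ∀ t ∈ Set.Icc x y, fb'' t + κ * fb t = lam)
    (hbx : fb x = f x) (hby : fb y = f y) :
    ∀ t ∈ Set.Icc x y, fb t ≤ f t := by
  have hconvex : ∀ t ∈ Ioo x y, 0 < (fb - f) t → 0 < (fb'' - f'') t := by
    intro t ht hpos
    have hf := hfineq t (Ioo_subset_Icc_self ht)
    have hb := hbeq t (Ioo_subset_Icc_self ht)
    simp only [Pi.sub_apply] at hpos ⊢
    nlinarith
  have hdiff := nonpos_of_endpoints_nonpos_of_second_deriv_pos (g' := fb' - f')
    (fun t ht => (hb1 t ht).sub (hf1 t ht))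
    (fun t ht => ((hb2 t (Ioo_subset_Icc_self ht)).sub (hf2 t (Ioo_subset_Icc_self ht))).hasDerivAt
      (Icc_mem_nhds ht.1 ht.2))
    hconvex (by simp [hbx]) (by simp [hby])
  exact fun t ht => sub_nonpos.mp (hdiff t ht)

/-- Jensen-type comparison for `κ < 0`: if `f'' + κ f < λ` on `[x, y]` and `f̄` solves
`f̄'' + κ f̄ = λ` with the same boundary values, then `f ≥ f̄` on `[x, y]`. -/
theorem jensen_comparison_neg (κ lam x y : ℝ) (hκ : κ < 0) (hxy : x < y)
    (f f' f'' fb fb' fb'' : ℝ → ℝ)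
    (hf1 : ∀ t ∈ Set.Icc x y, HasDerivWithinAt f (f' t) (Set.Icc x y) t)
    (hf2 : ∀ t ∈ Set.Icc x y, HasDerivWithinAt f' (f'' t) (Set.Icc x y) t)
    (hfineq : ∀ t ∈ Set.Icc x y, f'' t + κ * f t < lam)
    (hb1 : ∀ t ∈ Set.Icc x y, HasDerivWithinAt fb (fb' t) (Set.Icc x y) t)
    (hb2 : ∀ t ∈ Set.Icc x y, HasDerivWithinAt fb' (fb'' t) (Set.Icc x y) t)
    (hbeq : ∀ t ∈ Set.Icc x y, fb'' t + κ * fb t = lam)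
    (hbx : fb x = f x) (hby : fb y = f y) :
    ∀ t ∈ Set.Icc x y, fb t ≤ f t :=
  jensen_comparison_neg_general κ lam x y hκ f f' f'' fb fb' fb'' hf1 hf2 hfineq hb1 hb2 hbeq hbx
    hby
end

section
/- Let f : [x, y] → ℝ be twice differentiable with f''(t) + f(t) < λ for all t, where y - x < π. Let f̄ solve f̄'' + f̄ = λ with f̄(x) = f(x), f̄(y) = f(y). Then f ≥ f̄ on [x, y]. (Jensen's inequality for the case κ = 1 via the sin-trick.) -/
/-! With `v t = cos (t - (a + b) / 2)`, which solves `v'' + v = 0` and is positive on `[a, b]`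
because `b - a < π`, the Wronskian `W = g' v - g v'` of `g = f - f̄` satisfies
`W' = (g'' + g) v < 0`. Since `(g / v)' = W / v ^ 2` and `W` is strictly decreasing, `g / v` can
only have an interior critical point where it starts to decrease strictly, so its minimum on
`[a, b]` is attained at an endpoint, where it vanishes. -/

open Set Real

theorem min_le_of_hasDerivAt_div_of_strictAntiOn {h W p : ℝ → ℝ} {a b : ℝ}
    (hcont : ContinuousOn h (Icc a b)) (hderiv : ∀ t ∈ Ioo a b, HasDerivAt h (W t / p t) t)
    (hp : ∀ t ∈ Ioo a b, 0 < p t) (hW : StrictAntiOn W (Ioo a b)) :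
    ∀ t ∈ Icc a b, min (h a) (h b) ≤ h t := by
  intro t ht
  obtain ⟨t₀, ht₀, hmin⟩ := isCompact_Icc.exists_isMinOn ⟨t, ht⟩ hcont
  rcases ht₀.1.eq_or_lt with rfl | hat₀
  · exact (min_le_left _ _).trans (hmin ht)
  rcases ht₀.2.eq_or_lt with rfl | ht₀b
  · exact (min_le_right _ _).trans (hmin ht)
  have ht₀Ioo : t₀ ∈ Ioo a b := ⟨hat₀, ht₀b⟩
  have hW₀ : W t₀ = 0 := by
    have := (hmin.isLocalMin (Icc_mem_nhds hat₀ ht₀b)).hasDerivAt_eq_zero (hderiv t₀ ht₀Ioo)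
    exact (div_eq_zero_iff.mp this).resolve_right (hp t₀ ht₀Ioo).ne'
  have hanti : StrictAntiOn h (Icc t₀ b) := by
    refine strictAntiOn_of_hasDerivWithinAt_neg (convex_Icc t₀ b)
      (hcont.mono (Icc_subset_Icc hat₀.le le_rfl)) (fun s hs => ?_) (fun s hs => ?_)
      (f' := fun s => W s / p s)
    all_goals
      rw [interior_Icc] at hs
      have hsIoo : s ∈ Ioo a b := ⟨hat₀.trans hs.1, hs.2⟩
    · exact (hderiv s hsIoo).hasDerivWithinAt
    · exact div_neg_of_neg_of_pos (hW₀ ▸ hW ht₀Ioo hsIoo hs.1) (hp s hsIoo)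
  exact ((hmin (right_mem_Icc.mpr (hat₀.trans ht₀b).le)).not_gt
    (hanti (left_mem_Icc.mpr ht₀b.le) (right_mem_Icc.mpr ht₀b.le) ht₀b)).elim

theorem hasDerivAt_wronskian {g g' v v' : ℝ → ℝ} {g'' v'' t : ℝ}
    (hg : HasDerivAt g (g' t) t) (hg' : HasDerivAt g' g'' t)
    (hv : HasDerivAt v (v' t) t) (hv' : HasDerivAt v' v'' t) :
    HasDerivAt (fun s => g' s * v s - g s * v' s) (g'' * v t - g t * v'') t :=
  ((hg'.mul hv).sub (hg.mul hv')).congr_deriv (by ring)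

theorem cos_sub_midpoint_pos {a b t : ℝ} (hlen : b - a < π) (ht : t ∈ Icc a b) :
    0 < cos (t - (a + b) / 2) :=
  cos_pos_of_mem_Ioo ⟨by linarith [ht.1], by linarith [ht.2]⟩

theorem nonneg_of_deriv_deriv_add_neg {g g' g'' : ℝ → ℝ} {a b : ℝ} (hlen : b - a < π)
    (hcont : ContinuousOn g (Icc a b)) (hg : ∀ t ∈ Ioo a b, HasDerivAt g (g' t) t)
    (hg' : ∀ t ∈ Ioo a b, HasDerivAt g' (g'' t) t) (hneg : ∀ t ∈ Ioo a b, g'' t + g t < 0)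
    (ha : 0 ≤ g a) (hb : 0 ≤ g b) : ∀ t ∈ Icc a b, 0 ≤ g t := by
  set c := (a + b) / 2
  set v : ℝ → ℝ := fun s => cos (s - c)
  set v' : ℝ → ℝ := fun s => -sin (s - c)
  have hv_pos : ∀ t ∈ Icc a b, 0 < v t := fun t ht => cos_sub_midpoint_pos hlen ht
  have hv : ∀ t, HasDerivAt v (v' t) t := fun t => by
    simpa using ((hasDerivAt_id t).sub_const c).cos
  have hv' : ∀ t, HasDerivAt v' (-v t) t := fun t =>
    ((hasDerivAt_sin _).comp t ((hasDerivAt_id t).sub_const c)).neg.congr_deriv (by simp [v])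
  set W : ℝ → ℝ := fun s => g' s * v s - g s * v' s
  have hW' : ∀ t ∈ Ioo a b, HasDerivAt W ((g'' t + g t) * v t) t := fun t ht =>
    (hasDerivAt_wronskian (hg t ht) (hg' t ht) (hv t) (hv' t)).congr_deriv (by ring)
  have hW : StrictAntiOn W (Ioo a b) := by
    refine strictAntiOn_of_hasDerivWithinAt_neg (convex_Ioo a b)
      (f' := fun t => (g'' t + g t) * v t) (fun t ht => (hW' t ht).continuousAt.continuousWithinAt)
      (fun t ht => ?_) (fun t ht => ?_)
    all_goals rw [interior_Ioo] at ht
    · exact (hW' t ht).hasDerivWithinAt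
    · exact mul_neg_of_neg_of_pos (hneg t ht) (hv_pos t (Ioo_subset_Icc_self ht))
  intro t ht
  have hab : a ≤ b := ht.1.trans ht.2
  have hmin := min_le_of_hasDerivAt_div_of_strictAntiOn (h := fun s => g s / v s)
    (p := fun s => v s ^ 2)
    (hcont.div (continuous_cos.comp (continuous_sub_right c)).continuousOn
      fun s hs => (hv_pos s hs).ne')
    (fun s hs => (hg s hs).div (hv s) (hv_pos s (Ioo_subset_Icc_self hs)).ne')
    (fun s hs => pow_pos (hv_pos s (Ioo_subset_Icc_self hs)) 2) hW t ht
  have hends : 0 ≤ min (g a / v a) (g b / v b) :=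
    le_min (div_nonneg ha (hv_pos a (left_mem_Icc.mpr hab)).le)
      (div_nonneg hb (hv_pos b (right_mem_Icc.mpr hab)).le)
  simpa using (le_div_iff₀ (hv_pos t ht)).mp (hends.trans hmin)

theorem jensen_comparison_one_general (lam x y : ℝ) (hlen : y - x < Real.pi)
    (f f' f'' fb fb' fb'' : ℝ → ℝ)
    (hf1 : ∀ t ∈ Set.Icc x y, HasDerivWithinAt f (f' t) (Set.Icc x y) t)
    (hf2 : ∀ t ∈ Set.Icc x y, HasDerivWithinAt f' (f'' t) (Set.Icc x y) t)
    (hfineq : ∀ t ∈ Set.Icc x y, f'' t + f t < lam)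
    (hb1 : ∀ t ∈ Set.Icc x y, HasDerivWithinAt fb (fb' t) (Set.Icc x y) t)
    (hb2 : ∀ t ∈ Set.Icc x y, HasDerivWithinAt fb' (fb'' t) (Set.Icc x y) t)
    (hbeq : ∀ t ∈ Set.Icc x y, fb'' t + fb t = lam)
    (hbx : fb x = f x) (hby : fb y = f y) :
    ∀ t ∈ Set.Icc x y, fb t ≤ f t := by
  have interior_hasDerivAt {φ φ' : ℝ → ℝ}
      (hφ : ∀ t ∈ Icc x y, HasDerivWithinAt φ (φ' t) (Icc x y) t) :
      ∀ t ∈ Ioo x y, HasDerivAt φ (φ' t) t := fun t ht =>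
    (hφ t (Ioo_subset_Icc_self ht)).hasDerivAt (Icc_mem_nhds ht.1 ht.2)
  have hcont : ContinuousOn (fun s => f s - fb s) (Icc x y) := fun t ht =>
    (hf1 t ht).continuousWithinAt.sub (hb1 t ht).continuousWithinAt
  have hgap := nonneg_of_deriv_deriv_add_neg (g' := fun s => f' s - fb' s)
    (g'' := fun s => f'' s - fb'' s) hlen hcont
    (fun t ht => (interior_hasDerivAt hf1 t ht).sub (interior_hasDerivAt hb1 t ht))
    (fun t ht => (interior_hasDerivAt hf2 t ht).sub (interior_hasDerivAt hb2 t ht))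
    (fun t ht => by linarith [hfineq t (Ioo_subset_Icc_self ht), hbeq t (Ioo_subset_Icc_self ht)])
    (by simp [hbx]) (by simp [hby])
  exact fun t ht => sub_nonneg.mp (hgap t ht)

/-- Jensen-type comparison for `κ = 1` (sin-trick): if `f'' + f < λ` on `[x, y]` with
`y - x < π`, and `f̄` solves `f̄'' + f̄ = λ` with the same boundary values, then
`f ≥ f̄` on `[x, y]`. -/
theorem jensen_comparison_one (lam x y : ℝ) (hxy : x < y) (hlen : y - x < Real.pi)
    (f f' f'' fb fb' fb'' : ℝ → ℝ)
    (hf1 : ∀ t ∈ Set.Icc x y, HasDerivWithinAt f (f' t) (Set.Icc x y) t)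
    (hf2 : ∀ t ∈ Set.Icc x y, HasDerivWithinAt f' (f'' t) (Set.Icc x y) t)
    (hfineq : ∀ t ∈ Set.Icc x y, f'' t + f t < lam)
    (hb1 : ∀ t ∈ Set.Icc x y, HasDerivWithinAt fb (fb' t) (Set.Icc x y) t)
    (hb2 : ∀ t ∈ Set.Icc x y, HasDerivWithinAt fb' (fb'' t) (Set.Icc x y) t)
    (hbeq : ∀ t ∈ Set.Icc x y, fb'' t + fb t = lam)
    (hbx : fb x = f x) (hby : fb y = f y) :
    ∀ t ∈ Set.Icc x y, fb t ≤ f t :=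
  jensen_comparison_one_general lam x y hlen f f' f'' fb fb' fb'' hf1 hf2 hfineq hb1 hb2 hbeq hbx
    hby
end

section
/- Let X be a compact metric space and f : X → X a surjective 1-Lipschitz map. Then f is an isometry. -/
/-!
Pick a right inverse `g` of `f` and run the backward orbit of a pair `(x, y)` under `g × g`.
By compactness two of its terms, at times `m < n`, are `ε`-close; pushing them forward `m` times
with the 1-Lipschitz map `f × f` shows that `(x, y)` is `ε`-close to a pair `(u, v)` with
`f^[k + 1] u = x` and `f^[k + 1] v = y`. Hence
`dist x y ≤ dist (f u) (f v) ≤ dist (f x) (f y) + 2ε`.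
-/

open Function

section

variable {α β γ δ : Type*}

theorem LipschitzWith.prodMap [PseudoEMetricSpace α] [PseudoEMetricSpace β]
    [PseudoEMetricSpace γ] [PseudoEMetricSpace δ] {Kf Kg : NNReal} {f : α → β} {g : γ → δ}
    (hf : LipschitzWith Kf f) (hg : LipschitzWith Kg g) :
    LipschitzWith (max Kf Kg) (Prod.map f g) := by
  simpa only [mul_one] using!
    (hf.comp LipschitzWith.prod_fst).prodMk (hg.comp LipschitzWith.prod_snd)

theorem LipschitzWith.dist_iterate_le [PseudoMetricSpace α] {f : α → α} (hf : LipschitzWith 1 f)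
    (n : ℕ) (x y : α) : dist (f^[n] x) (f^[n] y) ≤ dist x y := by
  simpa only [one_pow, NNReal.coe_one, one_mul] using (hf.iterate n).dist_le_mul x y

theorem CompactSpace.exists_lt_dist_lt [PseudoMetricSpace α] [CompactSpace α] (u : ℕ → α)
    {ε : ℝ} (hε : 0 < ε) : ∃ m n, m < n ∧ dist (u n) (u m) < ε := by
  obtain ⟨_, φ, hφ, hlim⟩ := CompactSpace.tendsto_subseq u
  obtain ⟨N, hN⟩ := Metric.cauchySeq_iff'.1 hlim.cauchySeq ε hε
  exact ⟨φ N, φ (N + 1), hφ N.lt_succ_self, hN (N + 1) N.le_succ⟩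

theorem LipschitzWith.exists_iterate_succ_eq_dist_lt [PseudoMetricSpace α] [CompactSpace α]
    {f : α → α} (hf : LipschitzWith 1 f) (hsurj : Surjective f) (p : α) {ε : ℝ} (hε : 0 < ε) :
    ∃ q k, f^[k + 1] q = p ∧ dist q p < ε := by
  choose g hg using hsurj
  obtain ⟨m, n, hmn, hclose⟩ := CompactSpace.exists_lt_dist_lt (fun n ↦ g^[n] p) hε
  obtain ⟨k, rfl⟩ : ∃ k, n = m + (k + 1) := ⟨n - m - 1, by omega⟩
  refine ⟨g^[k + 1] p, k, (RightInverse.iterate hg (k + 1)) p, ?_⟩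
  calc dist (g^[k + 1] p) p = dist (f^[m] (g^[m + (k + 1)] p)) (f^[m] (g^[m] p)) := by
        rw [iterate_add_apply g m, RightInverse.iterate hg m, RightInverse.iterate hg m]
    _ ≤ dist (g^[m + (k + 1)] p) (g^[m] p) := hf.dist_iterate_le m _ _
    _ < ε := hclose

end

/-- A surjective 1-Lipschitz self-map of a compact metric space is an isometry. -/
theorem surjective_oneLipschitz_isometry {X : Type*} [MetricSpace X] [CompactSpace X]
    (f : X → X) (hsurj : Function.Surjective f)
    (hlip : ∀ a b : X, dist (f a) (f b) ≤ dist a b) :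
    Isometry f := by
  have hf : LipschitzWith 1 f := .mk_one hlip
  refine Isometry.of_dist_eq fun x y ↦
    le_antisymm (hlip x y) (le_of_forall_pos_le_add fun ε hε ↦ ?_)
  obtain ⟨⟨u, v⟩, k, hk, huv⟩ := LipschitzWith.exists_iterate_succ_eq_dist_lt
    (by simpa only [max_self] using hf.prodMap hf) (hsurj.prodMap hsurj) (x, y) (half_pos hε)
  simp only [Prod.map_iterate, Prod.map_apply, Prod.mk.injEq, iterate_succ_apply] at hk
  rw [Prod.dist_eq, max_lt_iff] at huv
  calc dist x y = dist (f^[k] (f u)) (f^[k] (f v)) := by rw [hk.1, hk.2]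
    _ ≤ dist (f u) (f v) := hf.dist_iterate_le k _ _
    _ ≤ dist (f u) (f x) + dist (f x) (f y) + dist (f y) (f v) := dist_triangle4 _ _ _ _
    _ ≤ dist (f x) (f y) + ε := by linarith [hlip u x, hlip y v, dist_comm y v]
end

section
/- Let V be a finite-dimensional real inner product space and F : V → ℝ concave, positively 1-homogeneous and continuous. Then there exists a unique vector h ∈ V (the gradient) such that F(h) = |h|² and F(v) ≤ ⟨h, v⟩ for every v ∈ V. -/
/-!
The gradient is the maximiser `h` of `F - ‖·‖² / 2`, which exists because a continuous positively
homogeneous function grows at most linearly. Comparing `h` with `h + t • v` and using the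
superadditivity of `F` gives `F v ≤ ⟪h, v⟫ + t ‖v‖² / 2` for all `t > 0`; comparing it with the
multiples `c • h` gives `F h = ‖h‖²`. Two gradients `h₁, h₂` satisfy `‖h₁‖² ≤ ⟪h₂, h₁⟫` and
`‖h₂‖² ≤ ⟪h₁, h₂⟫`, hence `‖h₁ - h₂‖² ≤ 0`.
-/

open Filter Topology
open scoped RealInnerProductSpace

theorem le_of_forall_pos_le_add_mul {a b c : ℝ} (h : ∀ t > 0, a ≤ b + t * c) : a ≤ b := by
  have hlim : Tendsto (fun t : ℝ => b + t * c) (𝓝[>] 0) (𝓝 b) :=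
    ((continuous_const.add (continuous_id.mul continuous_const)).tendsto' 0 b
      (by simp)).mono_left nhdsWithin_le_nhds
  exact ge_of_tendsto hlim (eventually_nhdsWithin_of_forall h)

theorem eq_of_forall_mul_sub_sq_half_le {a b : ℝ} (hb : 0 ≤ b)
    (hmax : ∀ c : ℝ, 0 ≤ c → c * a - c ^ 2 * b / 2 ≤ a - b / 2) : a = b := by
  have h0 := hmax 0 le_rfl
  -- at `c = 1 + s`, `hmax` reads `s (a - b) ≤ s² b / 2`; take `s = (a - b) / (b + 1)`
  have h1 := hmax (1 + (a - b) / (b + 1)) (by rw [← sub_nonneg]; field_simp; nlinarith)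
  field_simp at h1
  nlinarith [sq_nonneg (a - b), mul_nonneg hb (sq_nonneg (a - b))]

section Homogeneous

variable {E : Type*} [AddCommGroup E] [Module ℝ E] {F : E → ℝ}

theorem map_zero_of_homogeneous (hhom : ∀ c : ℝ, 0 ≤ c → ∀ v : E, F (c • v) = c * F v) :
    F 0 = 0 := by
  simpa using hhom 0 le_rfl 0

theorem add_le_of_concaveOn_of_homogeneous (hconc : ConcaveOn ℝ Set.univ F)
    (hhom : ∀ c : ℝ, 0 ≤ c → ∀ v : E, F (c • v) = c * F v) (a b : E) :
    F a + F b ≤ F (a + b) := by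
  have hmid := hconc.2 (Set.mem_univ a) (Set.mem_univ b) (by norm_num : (0 : ℝ) ≤ 1 / 2)
    (by norm_num : (0 : ℝ) ≤ 1 / 2) (by norm_num)
  have hdouble := hhom 2 zero_le_two ((1 / 2 : ℝ) • a + (1 / 2 : ℝ) • b)
  rw [smul_add, smul_smul, smul_smul] at hdouble
  norm_num at hmid hdouble
  linarith

end Homogeneous

theorem exists_forall_sub_half_norm_sq_le {E : Type*} [NormedAddCommGroup E] [ProperSpace E]
    {F : E → ℝ} (hcont : Continuous F) {C : ℝ} (hC : ∀ v, F v ≤ C * ‖v‖) :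
    ∃ h, ∀ v, F v - ‖v‖ ^ 2 / 2 ≤ F h - ‖h‖ ^ 2 / 2 := by
  refine (hcont.sub ((continuous_norm.pow 2).div_const 2)).exists_forall_ge ?_
  have hquad : Tendsto (fun r : ℝ => r * (C + -(r / 2))) atTop atBot :=
    tendsto_id.atTop_mul_atBot₀ <| tendsto_atBot_add_const_left _ C <|
      tendsto_neg_atTop_atBot.comp (tendsto_id.atTop_div_const two_pos)
  refine tendsto_atBot_mono (fun v => ?_) (hquad.comp tendsto_norm_cocompact_atTop)
  simp only [Pi.sub_apply, Pi.pow_apply, Function.comp_apply]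
  linarith [hC v]

section Normed

variable {E : Type*} [NormedAddCommGroup E] [NormedSpace ℝ E] {F : E → ℝ}

theorem le_mul_norm_of_homogeneous (hhom : ∀ c : ℝ, 0 ≤ c → ∀ v : E, F (c • v) = c * F v)
    {C : ℝ} (hC : ∀ w ∈ Metric.closedBall (0 : E) 1, F w ≤ C) (v : E) : F v ≤ C * ‖v‖ := by
  rcases eq_or_ne v 0 with rfl | hv
  · simp [map_zero_of_homogeneous hhom]
  have hnorm : ‖v‖ ≠ 0 := norm_ne_zero_iff.mpr hv
  have hunit : ‖v‖⁻¹ • v ∈ Metric.closedBall (0 : E) 1 := by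
    simp [norm_smul, inv_mul_cancel₀ hnorm]
  calc F v = ‖v‖ * F (‖v‖⁻¹ • v) := by
        rw [← hhom _ (norm_nonneg v), smul_smul, mul_inv_cancel₀ hnorm, one_smul]
    _ ≤ ‖v‖ * C := mul_le_mul_of_nonneg_left (hC _ hunit) (norm_nonneg v)
    _ = C * ‖v‖ := mul_comm _ _

theorem exists_le_mul_norm_of_homogeneous [ProperSpace E]
    (hhom : ∀ c : ℝ, 0 ≤ c → ∀ v : E, F (c • v) = c * F v) (hcont : Continuous F) :
    ∃ C, ∀ v, F v ≤ C * ‖v‖ := by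
  obtain ⟨C, hC⟩ := (isCompact_closedBall (0 : E) 1).bddAbove_image hcont.continuousOn
  exact ⟨C, le_mul_norm_of_homogeneous hhom fun w hw => hC ⟨w, hw, rfl⟩⟩

theorem eq_norm_sq_of_forall_sub_half_norm_sq_le
    (hhom : ∀ c : ℝ, 0 ≤ c → ∀ v : E, F (c • v) = c * F v) {h : E}
    (hmax : ∀ v, F v - ‖v‖ ^ 2 / 2 ≤ F h - ‖h‖ ^ 2 / 2) : F h = ‖h‖ ^ 2 := by
  refine eq_of_forall_mul_sub_sq_half_le (sq_nonneg ‖h‖) fun c hc => ?_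
  have hline := hmax (c • h)
  rwa [hhom c hc, norm_smul, mul_pow, Real.norm_eq_abs, sq_abs] at hline

end Normed

section InnerProduct

variable {V : Type*} [NormedAddCommGroup V] [InnerProductSpace ℝ V]

theorem le_inner_of_forall_sub_half_norm_sq_le {F : V → ℝ}
    (hsuper : ∀ a b : V, F a + F b ≤ F (a + b))
    (hhom : ∀ c : ℝ, 0 ≤ c → ∀ v : V, F (c • v) = c * F v) {h : V}
    (hmax : ∀ v, F v - ‖v‖ ^ 2 / 2 ≤ F h - ‖h‖ ^ 2 / 2) (v : V) : F v ≤ ⟪h, v⟫ := by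
  refine le_of_forall_pos_le_add_mul (c := ‖v‖ ^ 2 / 2) fun t ht => ?_
  have hexpand : ‖h + t • v‖ ^ 2 = ‖h‖ ^ 2 + 2 * t * ⟪h, v⟫ + t ^ 2 * ‖v‖ ^ 2 := by
    rw [norm_add_sq_real, real_inner_smul_right, norm_smul, mul_pow, Real.norm_eq_abs, sq_abs]
    ring
  have hstep := hmax (h + t • v)
  have hsplit := hsuper h (t • v)
  rw [hhom t ht.le] at hsplit
  refine le_of_mul_le_mul_left ?_ ht
  nlinarith

theorem eq_of_norm_sq_le_inner {h₁ h₂ : V} (h₁₂ : ‖h₁‖ ^ 2 ≤ ⟪h₂, h₁⟫)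
    (h₂₁ : ‖h₂‖ ^ 2 ≤ ⟪h₁, h₂⟫) : h₁ = h₂ := by
  have hsq : ‖h₁ - h₂‖ ^ 2 ≤ 0 := by
    rw [norm_sub_sq_real]
    linarith [real_inner_comm h₁ h₂]
  simpa [sub_eq_zero] using hsq.antisymm (sq_nonneg _)

end InnerProduct

/-- Existence and uniqueness of the gradient of a concave, positively 1-homogeneous,
continuous function on a finite-dimensional inner product space. -/
theorem gradient_exists_unique {V : Type*} [NormedAddCommGroup V]
    [InnerProductSpace ℝ V] [FiniteDimensional ℝ V]
    (F : V → ℝ) (hconc : ConcaveOn ℝ Set.univ F)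
    (hhom : ∀ c : ℝ, 0 ≤ c → ∀ v : V, F (c • v) = c * F v)
    (hcont : Continuous F) :
    ∃! h : V, F h = ‖h‖ ^ 2 ∧ ∀ v : V, F v ≤ (inner ℝ h v : ℝ) := by
  obtain ⟨C, hC⟩ := exists_le_mul_norm_of_homogeneous hhom hcont
  obtain ⟨h, hmax⟩ := exists_forall_sub_half_norm_sq_le hcont hC
  have hsuper := add_le_of_concaveOn_of_homogeneous hconc hhom
  have hFh := eq_norm_sq_of_forall_sub_half_norm_sq_le hhom hmax
  have hle := le_inner_of_forall_sub_half_norm_sq_le hsuper hhom hmax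
  refine ⟨h, ⟨hFh, hle⟩, ?_⟩
  rintro h' ⟨hFh', hle'⟩
  exact eq_of_norm_sq_le_inner (hFh' ▸ hle h') (hFh ▸ hle' h)
end

section
/- A geodesic metric space satisfying the Toponogov angle comparison for some κ (an Alexandrov space of curvature ≥ κ) is non-branching: if two unit-speed geodesics γ₁, γ₂ : [0, 1] → X agree on [0, t₁] for some 0 < t₁ < 1, then γ₁ = γ₂ on all of [0, 1]. -/
/-- The comparison angle `∠̃^κ` of a triangle with opposite side `a` and adjacent
sides `b`, `c`, computed via the cosine law in the model space `M²_κ`. -/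
noncomputable def cmpAngle (κ a b c : ℝ) : ℝ :=
  if κ = 0 then Real.arccos ((b ^ 2 + c ^ 2 - a ^ 2) / (2 * b * c))
  else Real.arccos ((csK κ a - csK κ b * csK κ c) / (κ * snK κ b * snK κ c))

/-!
Suppose `γ₁ = γ₂` on `[0, T]`. Put `a = γ(T - ε)`, `p = γ(T)` and `b = γ₁ t`, `c = γ₂ t` for
`T < t ≤ T + ε`. Both comparison angles `∠̃ a p b` and `∠̃ a p c` are straight, so the four-point
condition leaves `∠̃ b p c = 0`, which forces `b = c` as long as `ε` stays below the scale
`π / √κ` where the model cosine law degenerates. Steps of a fixed length `ε` reach time `1`.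
-/

open Real Set

section ModelTrigonometry

variable {κ : ℝ}

lemma snK_of_pos (hκ : 0 < κ) (t : ℝ) : snK κ t = sin (√κ * t) / √κ := if_pos hκ

lemma snK_of_neg (hκ : κ < 0) (t : ℝ) : snK κ t = sinh (√(-κ) * t) / √(-κ) := by
  rw [snK, if_neg hκ.not_gt, if_pos hκ]

lemma snK_zero_left (t : ℝ) : snK 0 t = t := by simp [snK]

lemma csK_of_pos (hκ : 0 < κ) (t : ℝ) : csK κ t = cos (√κ * t) := if_pos hκ

lemma csK_of_neg (hκ : κ < 0) (t : ℝ) : csK κ t = cosh (√(-κ) * t) := by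
  rw [csK, if_neg hκ.not_gt, if_pos hκ]

lemma csK_zero_left (t : ℝ) : csK 0 t = 1 := by simp [csK]

lemma csK_add (b c : ℝ) : csK κ (b + c) = csK κ b * csK κ c - κ * snK κ b * snK κ c := by
  rcases lt_trichotomy κ 0 with hκ | rfl | hκ
  · have hs : √(-κ) ^ 2 = -κ := sq_sqrt (by linarith)
    have hs0 : √(-κ) ≠ 0 := (sqrt_pos.2 (by linarith)).ne'
    simp only [csK_of_neg hκ, snK_of_neg hκ, mul_add, cosh_add]
    field_simp
    linear_combination (sinh (√(-κ) * b) * sinh (√(-κ) * c)) * hs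
  · simp [csK_zero_left]
  · have hs : √κ ^ 2 = κ := sq_sqrt hκ.le
    have hs0 : √κ ≠ 0 := (sqrt_pos.2 hκ).ne'
    simp only [csK_of_pos hκ, snK_of_pos hκ, mul_add, cos_add]
    field_simp
    linear_combination (-(sin (√κ * b) * sin (√κ * c))) * hs

lemma csK_sq_add_mul_snK_sq (t : ℝ) : csK κ t ^ 2 + κ * snK κ t ^ 2 = 1 := by
  rcases lt_trichotomy κ 0 with hκ | rfl | hκ
  · have hs : √(-κ) ^ 2 = -κ := sq_sqrt (by linarith)
    have hs0 : √(-κ) ≠ 0 := (sqrt_pos.2 (by linarith)).ne'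
    rw [csK_of_neg hκ, snK_of_neg hκ, cosh_sq]
    field_simp
    linear_combination (sinh (√(-κ) * t) ^ 2) * hs
  · simp [csK_zero_left]
  · have hs : √κ ^ 2 = κ := sq_sqrt hκ.le
    have hs0 : √κ ≠ 0 := (sqrt_pos.2 hκ).ne'
    rw [csK_of_pos hκ, snK_of_pos hκ, ← sin_sq_add_cos_sq (√κ * t)]
    field_simp
    linear_combination (-sin (√κ * t) ^ 2) * hs

lemma snK_pos {t : ℝ} (ht : 0 < t) (htκ : √κ * t < π) : 0 < snK κ t := by
  rcases lt_trichotomy κ 0 with hκ | rfl | hκ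
  · rw [snK_of_neg hκ]
    have hs : 0 < √(-κ) := sqrt_pos.2 (by linarith)
    exact div_pos (sinh_pos_iff.2 (by positivity)) hs
  · rwa [snK_zero_left]
  · rw [snK_of_pos hκ]
    have hs : 0 < √κ := sqrt_pos.2 hκ
    exact div_pos (sin_pos_of_pos_of_lt_pi (by positivity) htκ) hs

lemma csK_sub_one_div_neg (hκ : κ ≠ 0) {d : ℝ} (hd : 0 < d) (hdκ : √κ * d < 2 * π) :
    (csK κ d - 1) / κ < 0 := by
  rcases hκ.lt_or_gt with hκ | hκ
  · rw [csK_of_neg hκ]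
    have hs : 0 < √(-κ) := sqrt_pos.2 (by linarith)
    exact div_neg_of_pos_of_neg (sub_pos.2 (one_lt_cosh.2 (by positivity))) hκ
  · rw [csK_of_pos hκ]
    have hs : 0 < √κ := sqrt_pos.2 hκ
    refine div_neg_of_neg_of_pos (sub_neg.2 ((cos_le_one _).lt_of_ne fun h => ?_)) hκ
    rw [cos_eq_one_iff_of_lt_of_lt (by nlinarith [pi_pos]) hdκ] at h
    exact (mul_pos hs hd).ne' h

lemma cmpAngle_add_eq_pi {b c : ℝ} (hb : snK κ b ≠ 0) (hc : snK κ c ≠ 0) :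
    cmpAngle κ (b + c) b c = π := by
  by_cases hκ : κ = 0
  · subst hκ
    rw [snK_zero_left] at hb hc
    rw [cmpAngle, if_pos rfl, ← arccos_neg_one]
    congr 1
    field_simp
    ring
  · rw [cmpAngle, if_neg hκ, csK_add, ← arccos_neg_one]
    congr 1
    field_simp
    ring

lemma cmpAngle_nonneg (a b c : ℝ) : 0 ≤ cmpAngle κ a b c := by
  unfold cmpAngle
  split <;> exact arccos_nonneg _

lemma eq_zero_of_cmpAngle_le_zero {d e : ℝ} (hd : 0 ≤ d) (hdκ : √κ * d < 2 * π)
    (he : snK κ e ≠ 0) (h : cmpAngle κ d e e ≤ 0) : d = 0 := by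
  have h0 : cmpAngle κ d e e = 0 := h.antisymm (cmpAngle_nonneg _ _ _)
  by_contra hd0
  replace hd := hd.lt_of_ne' hd0
  by_cases hκ : κ = 0
  · subst hκ
    rw [snK_zero_left] at he
    have he2 : 0 < 2 * e * e := by nlinarith [sq_pos_of_ne_zero he]
    rw [cmpAngle, if_pos rfl, arccos_eq_zero, one_le_div he2] at h0
    nlinarith
  · rw [cmpAngle, if_neg hκ, arccos_eq_zero] at h0
    have hpyth := csK_sq_add_mul_snK_sq (κ := κ) e
    have key : (csK κ d - csK κ e * csK κ e) / (κ * snK κ e * snK κ e) =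
        (csK κ d - 1) / κ / snK κ e ^ 2 + 1 := by
      field_simp
      linear_combination -hpyth
    rw [key] at h0
    have := div_neg_of_neg_of_pos (csK_sub_one_div_neg hκ hd hdκ)
      (by positivity : 0 < snK κ e ^ 2)
    linarith

end ModelTrigonometry

def FourPointComparison (κ : ℝ) (X : Type*) [Dist X] : Prop :=
  ∀ p a b c : X,
    cmpAngle κ (dist a b) (dist p a) (dist p b) +
    cmpAngle κ (dist b c) (dist p b) (dist p c) +
    cmpAngle κ (dist c a) (dist p c) (dist p a) ≤ 2 * π

namespace FourPointComparison

variable {κ : ℝ} {X : Type*} [MetricSpace X]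

/-- If `b` and `c` both continue a segment from `a` through `p` by the same length, the two
straight comparison angles at `p` leave nothing for the angle between `b` and `c`. -/
lemma eq_of_straight_through (hX : FourPointComparison κ X) {p a b c : X} {δ e : ℝ}
    (hδ : 0 < δ) (hδκ : √κ * δ < π) (he : 0 < e) (heκ : √κ * e < π)
    (hpa : dist p a = δ) (hpb : dist p b = e) (hpc : dist p c = e)
    (hab : dist a b = δ + e) (hac : dist a c = e + δ) : b = c := by
  have hsδ := (snK_pos hδ hδκ).ne'
  have hse := (snK_pos he heκ).ne'
  have hangles := hX p a b c
  rw [hpa, hpb, hpc, hab, dist_comm c a, hac, cmpAngle_add_eq_pi hsδ hse,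
    cmpAngle_add_eq_pi hse hsδ] at hangles
  have hbc : √κ * dist b c < 2 * π := calc
    √κ * dist b c ≤ √κ * (e + e) := by
      gcongr
      simpa only [hpb, hpc] using dist_triangle_left b c p
    _ < 2 * π := by linarith
  exact dist_eq_zero.1 (eq_zero_of_cmpAngle_le_zero dist_nonneg hbc hse (by linarith))

variable {γ₁ γ₂ : ℝ → X}

lemma geodesic_eq_of_eq_of_eq (hX : FourPointComparison κ X)
    (h₁ : ∀ s ∈ Icc (0:ℝ) 1, ∀ t ∈ Icc (0:ℝ) 1, dist (γ₁ s) (γ₁ t) = |s - t|)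
    (h₂ : ∀ s ∈ Icc (0:ℝ) 1, ∀ t ∈ Icc (0:ℝ) 1, dist (γ₂ s) (γ₂ t) = |s - t|)
    {r T t : ℝ} (hr : 0 ≤ r) (hrT : r < T) (hTt : T < t) (ht : t ≤ 1)
    (hrTκ : √κ * (T - r) < π) (hTtκ : √κ * (t - T) < π) (hγr : γ₁ r = γ₂ r)
    (hγT : γ₁ T = γ₂ T) : γ₁ t = γ₂ t := by
  have hr1 : r ∈ Icc (0:ℝ) 1 := ⟨hr, by linarith⟩
  have hT1 : T ∈ Icc (0:ℝ) 1 := ⟨by linarith, by linarith⟩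
  have ht1 : t ∈ Icc (0:ℝ) 1 := ⟨by linarith, ht⟩
  refine hX.eq_of_straight_through (p := γ₁ T) (a := γ₁ r) (sub_pos.2 hrT) hrTκ
    (sub_pos.2 hTt) hTtκ ?_ ?_ ?_ ?_ ?_
  · rw [h₁ T hT1 r hr1, abs_of_pos (sub_pos.2 hrT)]
  · rw [h₁ T hT1 t ht1, abs_sub_comm, abs_of_pos (sub_pos.2 hTt)]
  · rw [hγT, h₂ T hT1 t ht1, abs_sub_comm, abs_of_pos (sub_pos.2 hTt)]
  · rw [h₁ r hr1 t ht1, abs_sub_comm, abs_of_pos (by linarith)]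
    ring
  · rw [hγr, h₂ r hr1 t ht1, abs_sub_comm, abs_of_pos (by linarith)]
    ring

lemma geodesic_eqOn_extend (hX : FourPointComparison κ X)
    (h₁ : ∀ s ∈ Icc (0:ℝ) 1, ∀ t ∈ Icc (0:ℝ) 1, dist (γ₁ s) (γ₁ t) = |s - t|)
    (h₂ : ∀ s ∈ Icc (0:ℝ) 1, ∀ t ∈ Icc (0:ℝ) 1, dist (γ₂ s) (γ₂ t) = |s - t|)
    {ε T : ℝ} (hε : 0 < ε) (hεT : ε ≤ T) (hεκ : √κ * ε < π)
    (hT : ∀ u ∈ Icc (0:ℝ) 1, u ≤ T → γ₁ u = γ₂ u) :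
    ∀ u ∈ Icc (0:ℝ) 1, u ≤ T + ε → γ₁ u = γ₂ u := by
  intro u hu huT
  rcases le_or_gt u T with hle | hlt
  · exact hT u hu hle
  have hγr := hT (T - ε) ⟨by linarith, by linarith [hu.2]⟩ (by linarith)
  have hγT := hT T ⟨by linarith, by linarith [hu.2]⟩ le_rfl
  refine hX.geodesic_eq_of_eq_of_eq h₁ h₂ (by linarith) (by linarith) hlt hu.2
    (by rwa [sub_sub_cancel]) ?_ hγr hγT
  calc √κ * (u - T) ≤ √κ * ε := by gcongr; linarith
    _ < π := hεκ

end FourPointComparison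

theorem alexandrov_nonbranching_general {X : Type*} [MetricSpace X] (κ : ℝ)
    (hAlex : ∀ p a b c : X,
      cmpAngle κ (dist a b) (dist p a) (dist p b) +
      cmpAngle κ (dist b c) (dist p b) (dist p c) +
      cmpAngle κ (dist c a) (dist p c) (dist p a) ≤ 2 * Real.pi)
    (γ₁ γ₂ : ℝ → X)
    (h₁ : ∀ s ∈ Set.Icc (0:ℝ) 1, ∀ t ∈ Set.Icc (0:ℝ) 1, dist (γ₁ s) (γ₁ t) = |s - t|)
    (h₂ : ∀ s ∈ Set.Icc (0:ℝ) 1, ∀ t ∈ Set.Icc (0:ℝ) 1, dist (γ₂ s) (γ₂ t) = |s - t|)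
    (t₁ : ℝ) (ht₁ : 0 < t₁)
    (hagree : ∀ t ∈ Set.Icc (0:ℝ) t₁, γ₁ t = γ₂ t) :
    ∀ t ∈ Set.Icc (0:ℝ) 1, γ₁ t = γ₂ t := by
  have hX : FourPointComparison κ X := hAlex
  set ε := min t₁ (π / (√κ + 1))
  have hε : 0 < ε := lt_min ht₁ (by positivity)
  have hεκ : √κ * ε < π := calc
    √κ * ε ≤ √κ * (π / (√κ + 1)) := by gcongr; exact min_le_right _ _
    _ < (√κ + 1) * (π / (√κ + 1)) := by gcongr; linarith
    _ = π := by field_simp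
  have hsteps : ∀ n : ℕ, ∀ u ∈ Icc (0:ℝ) 1, u ≤ t₁ + n * ε → γ₁ u = γ₂ u := by
    intro n
    induction n with
    | zero =>
      intro u hu hut
      exact hagree u ⟨hu.1, by simpa using hut⟩
    | succ n ih =>
      rw [Nat.cast_succ, add_one_mul, ← add_assoc]
      have hεT : ε ≤ t₁ + n * ε := (min_le_left _ _).trans (le_add_of_nonneg_right (by positivity))
      exact hX.geodesic_eqOn_extend h₁ h₂ hε hεT hεκ ih
  obtain ⟨n, hn⟩ := exists_nat_ge ε⁻¹
  intro t ht
  refine hsteps n t ht ?_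
  have : 1 ≤ n * ε := by rwa [← div_le_iff₀ hε, one_div]
  linarith [ht.2]

/-- An Alexandrov space of curvature `≥ κ` (a complete geodesic space satisfying the
Toponogov comparison, here in its four-point form) is non-branching: two unit-speed
geodesics `γ₁, γ₂ : [0,1] → X` that agree on `[0, t₁]` for some `0 < t₁ < 1` agree
on all of `[0, 1]`. -/
theorem alexandrov_nonbranching {X : Type*} [MetricSpace X] [CompleteSpace X] (κ : ℝ)
    (hgeo : ∀ x y : X, ∃ m : X, dist x m = dist x y / 2 ∧ dist m y = dist x y / 2)
    (hAlex : ∀ p a b c : X,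
      cmpAngle κ (dist a b) (dist p a) (dist p b) +
      cmpAngle κ (dist b c) (dist p b) (dist p c) +
      cmpAngle κ (dist c a) (dist p c) (dist p a) ≤ 2 * Real.pi)
    (γ₁ γ₂ : ℝ → X)
    (h₁ : ∀ s ∈ Set.Icc (0:ℝ) 1, ∀ t ∈ Set.Icc (0:ℝ) 1, dist (γ₁ s) (γ₁ t) = |s - t|)
    (h₂ : ∀ s ∈ Set.Icc (0:ℝ) 1, ∀ t ∈ Set.Icc (0:ℝ) 1, dist (γ₂ s) (γ₂ t) = |s - t|)
    (t₁ : ℝ) (ht₁ : 0 < t₁) (ht₁' : t₁ < 1)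
    (hagree : ∀ t ∈ Set.Icc (0:ℝ) t₁, γ₁ t = γ₂ t) :
    ∀ t ∈ Set.Icc (0:ℝ) 1, γ₁ t = γ₂ t :=
  alexandrov_nonbranching_general κ hAlex γ₁ γ₂ h₁ h₂ t₁ ht₁ hagree
end
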